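/- Let q = 2p be even with p ≥ 3, λ = 2·cos(π/q), and α ∈ (1/2, 1/λ). For every (t,v) in A ∪ D_3 one has −t/(1+tv) < v/(1+tv) and −t/(1+tv) < −(1+2λ·t)·(2λ−v)/(1+tv); that is, among the three consecutive approximation coefficients Θ_{n−1} = v/(1+tv), Θ_n = −t/(1+tv), Θ_{n+1} = −(1+2λt)(2λ−v)/(1+tv) at such a point, the minimum equals Θ_n. -/
import Mathlib


/-- The digit `d(x) = ⌊|1/(λx)| + 1 - α⌋` of the α-Rosen continued fraction. -/
noncomputable def rosenD (lam α x : ℝ) : ℤ := ⌊|1 / (lam * x)| + 1 - α⌋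

/-- The α-Rosen continued fraction map `T_α` on `[(α-1)λ, αλ)`. -/
noncomputable def rosenT (lam α x : ℝ) : ℝ :=
  if x = 0 then 0 else Real.sign x / x - lam * (rosenD lam α x : ℝ)

/-- `x` is `G_q`-irrational: the orbit of `x` under `T_α` never hits `0`. -/
def GIrrational (lam α x : ℝ) : Prop := ∀ n : ℕ, (rosenT lam α)^[n] x ≠ 0

/-- The recursion `u_n = d_n(x)·λ·u_{n-1} + ε_n(x)·u_{n-2}` for the numerators and
denominators of the α-Rosen convergents, with the index shifted by one:
`rosenPQ lam α x a b n = u_{n-1}` where `u_{-1} = a`, `u_0 = b`. -/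
noncomputable def rosenPQ (lam α x a b : ℝ) : ℕ → ℝ
  | 0 => a
  | 1 => b
  | n + 2 =>
      (rosenD lam α ((rosenT lam α)^[n] x) : ℝ) * lam * rosenPQ lam α x a b (n + 1)
        + Real.sign ((rosenT lam α)^[n] x) * rosenPQ lam α x a b n

/-- The approximation coefficient `Θ_n(x) = q_n² · |x - p_n/q_n|` of the α-Rosen
expansion of `x` (with `p_{-1}=1, q_{-1}=0, p_0=0, q_0=1`). -/
noncomputable def rosenTheta (lam α x : ℝ) (n : ℕ) : ℝ :=
  (rosenPQ lam α x 0 1 (n + 1)) ^ 2 *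
    |x - rosenPQ lam α x 1 0 (n + 1) / rosenPQ lam α x 0 1 (n + 1)|

/-- The natural extension map `𝒯_α(t,v) = (T_α(t), 1/(d(t)λ + ε(t)v))`. -/
noncomputable def rosenNE (lam α : ℝ) (tv : ℝ × ℝ) : ℝ × ℝ :=
  (rosenT lam α tv.1, 1 / ((rosenD lam α tv.1 : ℝ) * lam + Real.sign tv.1 * tv.2))

/-- The region `A`: `-δ₁ ≤ t ≤ -1/(λ+1)` and `g(t) ≤ v ≤ λ-1`, where
`g(x) = (|x| - 1/2)/((1/2)x)` and `δ₁ = 1/((α+1)λ)`. -/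
noncomputable def regA (lam α : ℝ) : Set (ℝ × ℝ) :=
  {tv | -(1 / ((α + 1) * lam)) ≤ tv.1 ∧ tv.1 ≤ -(1 / (lam + 1)) ∧
    (|tv.1| - 1 / 2) / ((1 / 2) * tv.1) ≤ tv.2 ∧ tv.2 ≤ lam - 1}

/-- The region `D₃`: `r_{p-1} ≤ t ≤ -2/(λ+4)` and `g(t) ≤ v ≤ λ/2`, where
`r_{p-1} = -(2α-1)λ/(2-(1-α)λ²)`. -/
noncomputable def regD3 (lam α : ℝ) : Set (ℝ × ℝ) :=
  {tv | -((2 * α - 1) * lam / (2 - (1 - α) * lam ^ 2)) ≤ tv.1 ∧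
    tv.1 ≤ -(2 / (lam + 4)) ∧
    (|tv.1| - 1 / 2) / ((1 / 2) * tv.1) ≤ tv.2 ∧ tv.2 ≤ lam / 2}

set_option maxHeartbeats 1000000 in
/-- **Lemma 3.11.**  For even `q = 2p`, `p ≥ 3`, `α ∈ (1/2, 1/λ)` and every point
`(t,v) ∈ A ∪ D₃`, the minimum of the three consecutive approximation coefficients
`Θ_{n-1} = v/(1+tv)`, `Θ_n = -t/(1+tv)`, `Θ_{n+1} = -(1+2λt)(2λ-v)/(1+tv)` is
`Θ_n`: one has `Θ_n < Θ_{n-1}` and `Θ_n < Θ_{n+1}`. -/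
theorem theta_min_on_region_three (p : ℕ) (hp : 3 ≤ p) (lam : ℝ)
    (hlam : lam = 2 * Real.cos (Real.pi / (2 * (p : ℝ))))
    (α : ℝ) (hα : α ∈ Set.Ioo (1 / 2 : ℝ) (1 / lam))
    (t v : ℝ) (htv : (t, v) ∈ regA lam α ∪ regD3 lam α) :
    -t / (1 + t * v) < v / (1 + t * v) ∧
    -t / (1 + t * v) < -((1 + 2 * lam * t) * (2 * lam - v)) / (1 + t * v) := by
  obtain ⟨hα1, hα2⟩ := hα
  have hp' : (3:ℝ) ≤ (p:ℝ) := by exact_mod_cast hp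
  have hpi := Real.pi_pos
  -- lam ≤ 2
  have hlam2 : lam ≤ 2 := by
    rw [hlam]
    nlinarith [Real.cos_le_one (Real.pi / (2 * (p:ℝ)))]
  -- lam ≥ 1.7
  have hlam17 : (17/10 : ℝ) ≤ lam := by
    have h1 : Real.pi / (2 * (p:ℝ)) ≤ Real.pi / 6 := by
      apply div_le_div_of_nonneg_left hpi.le (by norm_num) (by linarith)
    have h2 : Real.cos (Real.pi / 6) ≤ Real.cos (Real.pi / (2 * (p:ℝ))) := by
      apply Real.cos_le_cos_of_nonneg_of_le_pi
      · positivity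
      · linarith [Real.pi_pos]
      · exact h1
    rw [Real.cos_pi_div_six] at h2
    have h3 : (17/20 : ℝ) ≤ Real.sqrt 3 / 2 := by
      nlinarith [Real.sq_sqrt (show (0:ℝ) ≤ 3 by norm_num), Real.sqrt_nonneg 3]
    rw [hlam]; linarith
  have hl0 : (0:ℝ) < lam := by linarith
  have hαl : α * lam < 1 := (lt_div_iff₀ hl0).mp hα2
  rcases htv with hA | hD
  · obtain ⟨h1, h2, h3, h4⟩ := hA
    simp only at h1 h2 h3 h4
    have ht0 : t < 0 := by
      have : (0:ℝ) < 1/(lam+1) := by positivity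
      linarith
    rw [abs_of_neg ht0] at h3
    have hg : v * ((1/2)*t) ≤ -t - 1/2 :=
      (div_le_iff_of_neg (by linarith : (1/2)*t < 0)).mp h3
    have hg2 : v * t ≤ -2*t - 1 := by nlinarith [hg]
    have hcpos : (0:ℝ) < (α+1)*lam := by nlinarith
    have ht1 : -t * ((α+1)*lam) ≤ 1 := by
      have : -t ≤ 1/((α+1)*lam) := by linarith
      exact (le_div_iff₀ hcpos).mp this
    have ht2 : 1 ≤ -t * (lam+1) := by
      have : 1/(lam+1) ≤ -t := by linarith
      exact (div_le_iff₀ (by linarith : (0:ℝ) < lam+1)).mp this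
    have hts : -t ≤ 20/51 := by
      nlinarith [mul_nonneg (by linarith : (0:ℝ) ≤ -t)
        (by nlinarith : (0:ℝ) ≤ (α+1)*lam - 51/20)]
    have hden : 0 < 1 + t * v := by
      nlinarith [mul_nonneg (by linarith : (0:ℝ) ≤ -t) (by linarith : (0:ℝ) ≤ lam - 1 - v),
        mul_nonneg (by linarith : (0:ℝ) ≤ t + 20/51) (by linarith : (0:ℝ) ≤ lam - 1)]
    have hvt : -t < v := by
      nlinarith [hg2, ht0.le, hts,
        mul_nonneg (by linarith : (0:ℝ) ≤ 20/51 + t) (by linarith : (0:ℝ) ≤ 20/51 - t)]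
    refine ⟨(div_lt_div_iff_of_pos_right hden).mpr (by linarith), (div_lt_div_iff_of_pos_right hden).mpr ?_⟩
    have h2lt : 1 + 2*lam*t < 0 := by
      nlinarith [ht2, mul_pos (show (0:ℝ) < -t by linarith) (show (0:ℝ) < lam - 1 by linarith)]
    nlinarith [mul_nonneg (by linarith : (0:ℝ) ≤ -(1+2*lam*t)) (by linarith : (0:ℝ) ≤ lam - 1 - v),
      mul_nonneg (by linarith : (0:ℝ) ≤ -t*(lam+1) - 1) (by nlinarith : (0:ℝ) ≤ 2*lam^2 + 2*lam - 1),
      hlam17, hlam2, ht0.le]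
  · obtain ⟨h1, h2, h3, h4⟩ := hD
    simp only at h1 h2 h3 h4
    have ht0 : t < 0 := by
      have : (0:ℝ) < 2/(lam+4) := by positivity
      linarith
    rw [abs_of_neg ht0] at h3
    have hg : v * ((1/2)*t) ≤ -t - 1/2 :=
      (div_le_iff_of_neg (by linarith : (1/2)*t < 0)).mp h3
    have hg2 : v * t ≤ -2*t - 1 := by nlinarith [hg]
    have hden0 : (0:ℝ) < 2 - (1-α)*lam^2 := by
      nlinarith [mul_pos (show (0:ℝ) < α - 1/2 by linarith) (mul_pos hl0 hl0)]
    have hNt : -t * (2 - (1-α)*lam^2) ≤ (2*α-1)*lam := by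
      have : -t ≤ (2*α-1)*lam / (2 - (1-α)*lam^2) := by linarith
      exact (le_div_iff₀ hden0).mp this
    have hkey : (2*α-1)*lam*(1+lam) < 2 - (1-α)*lam^2 := by
      nlinarith [mul_pos (show (0:ℝ) < lam + 2 by linarith) (show (0:ℝ) < 1 - α*lam by linarith)]
    have hs : -t * (1+lam) < 1 := by
      nlinarith [mul_le_mul_of_nonneg_left hNt (show (0:ℝ) ≤ 1+lam by linarith), hkey, hden0]
    have hts : -t < 10/27 := by
      nlinarith [mul_nonneg (show (0:ℝ) ≤ -t by linarith) (show (0:ℝ) ≤ lam - 17/10 by linarith)]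
    have ht2 : 2 ≤ -t * (lam+4) := by
      have : 2/(lam+4) ≤ -t := by linarith
      exact (div_le_iff₀ (by linarith : (0:ℝ) < lam+4)).mp this
    have hden : 0 < 1 + t * v := by
      nlinarith [mul_nonneg (by linarith : (0:ℝ) ≤ -t) (by linarith : (0:ℝ) ≤ lam/2 - v),
        mul_nonneg (by linarith : (0:ℝ) ≤ t + 10/27) (by linarith : (0:ℝ) ≤ lam/2)]
    have hvt : -t < v := by
      nlinarith [hg2, ht0.le, hts,
        mul_nonneg (by linarith : (0:ℝ) ≤ 10/27 + t) (by linarith : (0:ℝ) ≤ 10/27 - t)]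
    refine ⟨(div_lt_div_iff_of_pos_right hden).mpr (by linarith), (div_lt_div_iff_of_pos_right hden).mpr ?_⟩
    have h2lt : 1 + 2*lam*t < 0 := by
      nlinarith [mul_nonneg (show (0:ℝ) ≤ 2*lam by linarith) (show (0:ℝ) ≤ -t*(lam+4) - 2 by linarith)]
    nlinarith [mul_nonneg (by linarith : (0:ℝ) ≤ -(1+2*lam*t)) (by linarith : (0:ℝ) ≤ lam/2 - v),
      mul_nonneg (by linarith : (0:ℝ) ≤ -t*(lam+4) - 2) (by nlinarith : (0:ℝ) ≤ 3*lam^2 - 1),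
      hlam17, hlam2, ht0.le]
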